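/- The left peak polynomial W_n^{(ℓ)}(t) = Σ_{π ∈ S_n} t^{lpe(π)} satisfies W_n^{(ℓ)}(4t/(1+t)^2) = B_n(t)/(1+t)^n, where B_n(t) = Σ_{π ∈ B_n} t^{des_B(π)} is the type B Eulerian polynomial. -/

import Mathlib

open scoped Classical

noncomputable section

/-- The value of `π` at the 1-based position `i`, with the convention
`π(0) = π(n+1) = 0` and values in `{1, …, n}`. -/
def pval {n : ℕ} (π : Equiv.Perm (Fin n)) (i : ℕ) : ℕ :=
  if h : 1 ≤ i ∧ i ≤ n then ((π ⟨i - 1, by omega⟩ : Fin n) : ℕ) + 1 else 0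

/-- The descent set of `π`: positions `1 ≤ s ≤ n-1` with `π(s) > π(s+1)`. -/
def desSet {n : ℕ} (π : Equiv.Perm (Fin n)) : Finset ℕ :=
  (Finset.Ico 1 n).filter fun s => pval π (s + 1) < pval π s

/-- The descent number of `π`. -/
def des {n : ℕ} (π : Equiv.Perm (Fin n)) : ℕ := (desSet π).card

/-- `i` is a peak of `π` (with the convention `π(0) = π(n+1) = 0`). -/
def isPk {n : ℕ} (π : Equiv.Perm (Fin n)) (i : ℕ) : Prop :=
  pval π (i - 1) < pval π i ∧ pval π (i + 1) < pval π i

/-- Interior peak set: peaks `i` with `1 < i < n`. -/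
def intPk {n : ℕ} (π : Equiv.Perm (Fin n)) : Finset ℕ :=
  (Finset.Ioo 1 n).filter (isPk π)

/-- Left peak set: peaks `i` with `1 ≤ i < n`. -/
def leftPk {n : ℕ} (π : Equiv.Perm (Fin n)) : Finset ℕ :=
  (Finset.Ico 1 n).filter (isPk π)

/-- Right peak set: peaks `i` with `1 < i ≤ n`. -/
def rightPk {n : ℕ} (π : Equiv.Perm (Fin n)) : Finset ℕ :=
  (Finset.Ioc 1 n).filter (isPk π)

/-- Exterior peak set: peaks `i` with `1 ≤ i ≤ n`. -/
def extPk {n : ℕ} (π : Equiv.Perm (Fin n)) : Finset ℕ :=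
  (Finset.Icc 1 n).filter (isPk π)



/-- A signed permutation of `{±1, …, ±n}`: a bijection `π : ℤ → ℤ` with
`π(-i) = -π(i)` that fixes every integer of absolute value greater than `n`. -/
def IsSignedPerm (n : ℕ) (π : Equiv.Perm ℤ) : Prop :=
  (∀ i : ℤ, π (-i) = -π i) ∧ ∀ i : ℤ, (n : ℤ) < |i| → π i = i

/-- The hyperoctahedral group `B_n`, realized as a subgroup of `Equiv.Perm ℤ`. -/
def Bgroup (n : ℕ) : Subgroup (Equiv.Perm ℤ) where
  carrier := {π | IsSignedPerm n π}
  one_mem' := ⟨fun i => by simp, fun i _ => rfl⟩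
  mul_mem' := fun {a b} ha hb =>
    ⟨fun i => by simp only [Equiv.Perm.mul_apply, hb.1 i, ha.1 (b i)],
     fun i hi => by simp only [Equiv.Perm.mul_apply, hb.2 i hi, ha.2 i hi]⟩
  inv_mem' := fun {a} ha =>
    ⟨fun i => by rw [Equiv.Perm.inv_eq_iff_eq, ha.1, Equiv.Perm.coe_inv, Equiv.apply_symm_apply],
     fun i hi => by rw [Equiv.Perm.inv_eq_iff_eq]; exact (ha.2 i hi).symm⟩

/-- The type B descent set of `π`: positions `0 ≤ s ≤ n-1` with `π(s) > π(s+1)`. -/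
def desSetB (n : ℕ) (π : Equiv.Perm ℤ) : Finset ℕ :=
  (Finset.range n).filter fun s => π ((s : ℤ) + 1) < π (s : ℤ)

/-- The type B descent number. -/
def desB (n : ℕ) (π : Equiv.Perm ℤ) : ℕ := (desSetB n π).card

/-!
A signed permutation is a pair `(σ, ε)` of a permutation `σ ∈ S_n` and signs `ε ∈ {±1}ⁿ`, and its
type B descents are the descents of the word `0, ε₁σ(1), …, εₙσ(n)`. Fix `σ` and sum `t ^ des_B`
over the `2 ^ n` sign vectors, one letter at a time from the left. The sum over the signs of a
suffix only depends on whether the letter before it is smaller or larger in absolute value, and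
these two partial sums satisfy a recursion whose solution is `(4t) ^ lpk(σ) (1 + t) ^ (n - 2 lpk(σ))`:
each left peak of `σ` trades two factors `1 + t` for `4t`. Summing over `σ` and dividing by
`(1 + t) ^ n` gives the identity.
-/

open PowerSeries
open scoped Finset

/-- `descents p l` is the number of descents of the word `p :: l`. -/
def descents : ℤ → List ℤ → ℕ
  | _, [] => 0
  | p, a :: l => (if a < p then 1 else 0) + descents a l

/-- `peaks x y l` is the number of interior peaks of the word `x :: y :: l`. -/
def peaks : ℤ → ℤ → List ℤ → ℕ
  | _, _, [] => 0
  | x, y, c :: l => (if x < y ∧ c < y then 1 else 0) + peaks y c l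

theorem card_filter_range_descents (n : ℕ) (f : ℕ → ℤ) :
    #{s ∈ Finset.range n | f (s + 1) < f s} =
      descents (f 0) (List.ofFn fun j : Fin n => f (j + 1)) := by
  induction n generalizing f with
  | zero => simp [descents]
  | succ n ih =>
    rw [Finset.card_filter, Finset.sum_range_succ', ← Finset.card_filter, ih (fun s => f (s + 1)),
      List.ofFn_succ, descents]
    simp only [Fin.val_zero, Fin.val_succ, zero_add]
    omega

theorem card_filter_range_peaks (m : ℕ) (f : ℕ → ℤ) :
    #{s ∈ Finset.range m | f s < f (s + 1) ∧ f (s + 2) < f (s + 1)} =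
      peaks (f 0) (f 1) (List.ofFn fun j : Fin m => f (j + 2)) := by
  induction m generalizing f with
  | zero => simp [peaks]
  | succ m ih =>
    rw [Finset.card_filter, Finset.sum_range_succ', ← Finset.card_filter, ih (fun s => f (s + 1)),
      List.ofFn_succ, peaks]
    simp only [Fin.val_zero, Fin.val_succ, zero_add, Nat.reduceAdd, add_right_comm _ 1 2]
    omega

def boolSign (b : Bool) : ℤ := if b then 1 else -1

/-- `signedDescentSum p l` is the sum of `X ^ descents p l'` over the `2 ^ l.length` words `l'`
obtained from `l` by changing the signs of some letters. -/
def signedDescentSum : ℤ → List ℤ → PowerSeries ℚ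
  | _, [] => 1
  | p, a :: l => (if a < p then X else 1) * signedDescentSum a l +
      (if -a < p then X else 1) * signedDescentSum (-a) l

theorem sum_pow_descents_signs {n : ℕ} (p : ℤ) (w : Fin n → ℤ) :
    ∑ ε : Fin n → Bool, (X : PowerSeries ℚ) ^ descents p (List.ofFn fun i => boolSign (ε i) * w i) =
      signedDescentSum p (List.ofFn w) := by
  induction n generalizing p with
  | zero => simp [descents, signedDescentSum]
  | succ n ih =>
    rw [← (Fin.consEquiv fun _ => Bool).sum_comp, Fintype.sum_prod_type, Fintype.sum_bool,
      List.ofFn_succ, signedDescentSum]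
    simp only [Fin.consEquiv_apply, List.ofFn_succ, Fin.cons_zero, Fin.cons_succ, descents,
      pow_add, ← Finset.mul_sum, ih]
    simp [boolSign, apply_ite (X ^ ·)]

def peakVar : PowerSeries ℚ := 4 * X * ((1 + X) ^ 2)⁻¹

theorem peakVar_mul_one_add_X_sq : peakVar * (1 + X) ^ 2 = 4 * X := by
  rw [peakVar, mul_assoc, PowerSeries.inv_mul_cancel _ (by simp), mul_one]

/-- For a letter `p` before `a` with `|p| < a`, `signedDescentSum p (a :: l)` is the first left-hand
side; for `|p| > a` it is the second one, times `X` if `p > 0`. -/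
theorem signedDescentSum_eq_peakVar_pow (l : List ℤ) (x a : ℤ) (ha : 0 < a) (hl : ∀ b ∈ l, 0 < b)
    (hchain : (a :: l).IsChain (· ≠ ·)) :
    (x < a → signedDescentSum a l + X * signedDescentSum (-a) l =
      peakVar ^ peaks x a l * (1 + X) ^ (l.length + 1)) ∧
    (a < x → signedDescentSum a l + signedDescentSum (-a) l =
      2 * peakVar ^ peaks x a l * (1 + X) ^ l.length) := by
  induction l generalizing x a with
  | nil =>
    refine ⟨fun _ => ?_, fun _ => ?_⟩ <;>
      simp only [signedDescentSum, peaks, List.length_nil] <;> ring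
  | cons b l ih =>
    obtain ⟨hne, hchain⟩ := List.isChain_cons_cons.mp hchain
    have hb : 0 < b := hl b List.mem_cons_self
    obtain ⟨ih_lt, ih_gt⟩ := ih a b hb (fun c hc => hl c (List.mem_cons_of_mem b hc)) hchain
    rcases hne.lt_or_gt with hab | hba
    · have h : ∀ y, -a ≤ y → y ≤ a → signedDescentSum y (b :: l) =
          signedDescentSum b l + X * signedDescentSum (-b) l := by
        intro y h1 h2
        rw [signedDescentSum, if_neg (by omega), if_pos (by omega), one_mul]
      rw [h a (by omega) le_rfl, h (-a) le_rfl (by omega), ih_lt hab, peaks,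
        if_neg (by omega), zero_add, List.length_cons]
      constructor <;> intro _ <;> ring
    · rw [signedDescentSum, signedDescentSum, if_pos hba, if_pos (by omega : -b < a),
        if_neg (by omega : ¬ b < -a), if_neg (by omega : ¬ -b < -a), peaks, List.length_cons]
      constructor
      · intro hxa
        rw [if_pos ⟨hxa, hba⟩]
        linear_combination (2 * X) * ih_gt hba -
          peakVar ^ peaks a b l * (1 + X) ^ l.length * peakVar_mul_one_add_X_sq
      · intro hax
        rw [if_neg (by omega), zero_add]
        linear_combination (1 + X) * ih_gt hba

section SignedPerm

variable {n : ℕ}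

theorem boolSign_mul_self (b : Bool) : boolSign b * boolSign b = 1 := by
  cases b <;> simp [boolSign]

theorem boolSign_decide_pos_mul_natAbs (v : ℤ) : boolSign (decide (0 < v)) * v.natAbs = v := by
  rcases lt_trichotomy v 0 with h | h | h <;> simp [boolSign, h, h.not_gt, abs_of_neg, abs_of_pos]

theorem natAbs_boolSign_mul (b : Bool) (i : ℤ) : (boolSign b * i).natAbs = i.natAbs := by
  cases b <;> simp [boolSign]

/-- The condition `IsSignedPerm` for functions not yet known to be bijective. -/
def IsSignedFun (n : ℕ) (f : ℤ → ℤ) : Prop :=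
  (∀ i, f (-i) = -f i) ∧ ∀ i : ℤ, (n : ℤ) < |i| → f i = i

namespace IsSignedFun

variable {f g : ℤ → ℤ}

theorem map_zero (hf : IsSignedFun n f) : f 0 = 0 := by
  have := hf.1 0
  rw [neg_zero] at this
  omega

theorem map_boolSign_mul (hf : IsSignedFun n f) (b : Bool) (i : ℤ) :
    f (boolSign b * i) = boolSign b * f i := by
  cases b <;> simp [boolSign, hf.1]

theorem comp (hf : IsSignedFun n f) (hg : IsSignedFun n g) : IsSignedFun n (f ∘ g) :=
  ⟨fun i => by simp [hg.1, hf.1], fun i hi => by simp [hg.2 i hi, hf.2 i hi]⟩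

theorem ext (hf : IsSignedFun n f) (hg : IsSignedFun n g)
    (h : ∀ j : Fin n, f (j + 1) = g (j + 1)) : f = g := by
  funext i
  rcases Nat.eq_zero_or_pos i.natAbs with h0 | hpos
  · rw [Int.natAbs_eq_zero.mp h0, hf.map_zero, hg.map_zero]
  rcases lt_or_ge n i.natAbs with hout | hin
  · have hi : (n : ℤ) < |i| := by rw [Int.abs_eq_natAbs]; exact_mod_cast hout
    rw [hf.2 i hi, hg.2 i hi]
  have hj := h ⟨i.natAbs - 1, by omega⟩
  have hcast : ((i.natAbs - 1 : ℕ) : ℤ) + 1 = i.natAbs := by omega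
  simp only [hcast] at hj
  rcases Int.natAbs_eq i with hi | hi <;> rw [hi]
  · exact hj
  · rw [hf.1, hg.1, hj]

end IsSignedFun

theorem isSignedFun_id : IsSignedFun n id := ⟨fun _ => rfl, fun _ _ => rfl⟩

/-- The odd function `j + 1 ↦ boolSign (ε j) * (σ j + 1)`, extended by the identity for `|i| > n`. -/
def signedPermFun (σ : Equiv.Perm (Fin n)) (ε : Fin n → Bool) (i : ℤ) : ℤ :=
  if h : 1 ≤ i.natAbs ∧ i.natAbs ≤ n then
    i.sign * (boolSign (ε ⟨i.natAbs - 1, by omega⟩) * ((σ ⟨i.natAbs - 1, by omega⟩ : ℕ) + 1))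
  else i

theorem isSignedFun_signedPermFun (σ : Equiv.Perm (Fin n)) (ε : Fin n → Bool) :
    IsSignedFun n (signedPermFun σ ε) := by
  refine ⟨fun i => ?_, fun i hi => ?_⟩
  · unfold signedPermFun
    simp only [Int.natAbs_neg, Int.sign_neg]
    split_ifs <;> ring
  · rw [Int.abs_eq_natAbs] at hi
    rw [signedPermFun, dif_neg (by omega)]

theorem signedPermFun_succ (σ : Equiv.Perm (Fin n)) (ε : Fin n → Bool) (j : Fin n) :
    signedPermFun σ ε (j + 1) = boolSign (ε j) * ((σ j : ℕ) + 1) := by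
  have habs : ((j : ℤ) + 1).natAbs = j + 1 := by omega
  rw [signedPermFun, dif_pos (by omega)]
  simp only [habs, Nat.add_sub_cancel, Fin.eta]
  rw [Int.sign_eq_one_of_pos (by omega), one_mul]

theorem signedPermFun_inv_comp (σ : Equiv.Perm (Fin n)) (ε : Fin n → Bool) :
    signedPermFun σ⁻¹ (ε ∘ ⇑σ⁻¹) ∘ signedPermFun σ ε = id := by
  refine ((isSignedFun_signedPermFun _ _).comp (isSignedFun_signedPermFun _ _)).ext
    isSignedFun_id fun j => ?_
  rw [Function.comp_apply, signedPermFun_succ, (isSignedFun_signedPermFun _ _).map_boolSign_mul,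
    signedPermFun_succ]
  simp [← mul_assoc, boolSign_mul_self]

def signedPerm (σ : Equiv.Perm (Fin n)) (ε : Fin n → Bool) : Equiv.Perm ℤ where
  toFun := signedPermFun σ ε
  invFun := signedPermFun σ⁻¹ (ε ∘ ⇑σ⁻¹)
  left_inv := congrFun (signedPermFun_inv_comp σ ε)
  right_inv i := by
    simpa [Function.comp_assoc] using congrFun (signedPermFun_inv_comp σ⁻¹ (ε ∘ ⇑σ⁻¹)) i

end SignedPerm

section Decode

variable {n : ℕ} {π : Equiv.Perm ℤ}

theorem isSignedPerm_signedPerm (σ : Equiv.Perm (Fin n)) (ε : Fin n → Bool) :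
    IsSignedPerm n (signedPerm σ ε) :=
  isSignedFun_signedPermFun σ ε

theorem signedPerm_succ (σ : Equiv.Perm (Fin n)) (ε : Fin n → Bool) (j : Fin n) :
    signedPerm σ ε (j + 1) = boolSign (ε j) * ((σ j : ℕ) + 1) :=
  signedPermFun_succ σ ε j

namespace IsSignedPerm

theorem apply_succ_ne_zero (h : IsSignedPerm n π) (j : Fin n) : π (j + 1) ≠ 0 := fun h0 => by
  have := π.injective (h0.trans (IsSignedFun.map_zero h).symm)
  omega

theorem natAbs_apply_succ_le (h : IsSignedPerm n π) (j : Fin n) : (π (j + 1)).natAbs ≤ n := by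
  by_contra! hgt
  have hfix := h.2 (π (j + 1)) (by rw [Int.abs_eq_natAbs]; exact_mod_cast hgt)
  rw [π.injective hfix] at hgt
  omega

def absPerm (h : IsSignedPerm n π) : Equiv.Perm (Fin n) :=
  Equiv.ofBijective (fun j => ⟨(π (j + 1)).natAbs - 1, by
    have := h.natAbs_apply_succ_le j; have := h.apply_succ_ne_zero j; omega⟩) <|
    Finite.injective_iff_bijective.mp fun i j hij => by
      have hi := h.apply_succ_ne_zero i
      have hj := h.apply_succ_ne_zero j
      have hij' : (π (i + 1)).natAbs = (π (j + 1)).natAbs := by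
        simp only [Fin.mk.injEq] at hij
        have := Int.natAbs_pos.mpr hi
        have := Int.natAbs_pos.mpr hj
        omega
      rcases Int.natAbs_eq_natAbs_iff.mp hij' with he | he
      · exact Fin.ext (by have := π.injective he; omega)
      · rw [← h.1] at he
        have := π.injective he
        omega

theorem absPerm_apply (h : IsSignedPerm n π) (j : Fin n) :
    ((h.absPerm j : ℕ) : ℤ) + 1 = (π (j + 1)).natAbs := by
  have := h.apply_succ_ne_zero j
  simp only [absPerm, Equiv.ofBijective_apply]
  omega

end IsSignedPerm

def signs (n : ℕ) (π : Equiv.Perm ℤ) : Fin n → Bool := fun j => decide (0 < π (j + 1))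

theorem signedPerm_absPerm_signs (h : IsSignedPerm n π) :
    signedPerm h.absPerm (signs n π) = π :=
  Equiv.ext <| congrFun <| IsSignedFun.ext (isSignedPerm_signedPerm _ _) h fun j => by
    rw [signedPerm_succ, h.absPerm_apply, signs, boolSign_decide_pos_mul_natAbs]

theorem absPerm_signedPerm (σ : Equiv.Perm (Fin n)) (ε : Fin n → Bool) :
    (isSignedPerm_signedPerm σ ε).absPerm = σ := by
  ext j
  have := (isSignedPerm_signedPerm σ ε).absPerm_apply j
  rw [signedPerm_succ, natAbs_boolSign_mul] at this
  omega

theorem signs_signedPerm (σ : Equiv.Perm (Fin n)) (ε : Fin n → Bool) :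
    signs n (signedPerm σ ε) = ε := by
  funext j
  rw [signs, signedPerm_succ]
  cases ε j <;> simp [boolSign]

def signedPermEquiv (n : ℕ) : Equiv.Perm (Fin n) × (Fin n → Bool) ≃ Bgroup n where
  toFun p := ⟨signedPerm p.1 p.2, isSignedPerm_signedPerm p.1 p.2⟩
  invFun π := ((show IsSignedPerm n π from π.2).absPerm, signs n π)
  left_inv p := Prod.ext (absPerm_signedPerm p.1 p.2) (signs_signedPerm p.1 p.2)
  right_inv π := Subtype.ext (signedPerm_absPerm_signs π.2)

end Decode

section LeftPeaks

variable {n : ℕ}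

theorem desB_signedPerm (σ : Equiv.Perm (Fin n)) (ε : Fin n → Bool) :
    desB n (signedPerm σ ε) =
      descents 0 (List.ofFn fun j => boolSign (ε j) * ((σ j : ℕ) + 1)) := by
  rw [desB, desSetB]
  simpa only [Nat.cast_add, Nat.cast_one, Nat.cast_zero, signedPerm_succ,
    IsSignedFun.map_zero (isSignedPerm_signedPerm σ ε)] using
    card_filter_range_descents n fun s => signedPerm σ ε s

theorem pval_zero (σ : Equiv.Perm (Fin n)) : pval σ 0 = 0 := rfl

theorem pval_succ (σ : Equiv.Perm (Fin n)) (j : Fin n) : pval σ (j + 1) = σ j + 1 := by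
  rw [pval, dif_pos (by omega)]
  rfl

theorem card_leftPk {m : ℕ} (σ : Equiv.Perm (Fin (m + 1))) :
    (leftPk σ).card = peaks 0 ((σ 0 : ℕ) + 1) (List.ofFn fun j : Fin m => (σ j.succ : ℕ) + 1) := by
  have h := card_filter_range_peaks m fun i => (pval σ i : ℤ)
  simp only [Nat.cast_lt] at h
  rw [leftPk, Finset.card_filter, Finset.sum_Ico_eq_sum_range, ← Finset.card_filter]
  simp only [isPk, Nat.add_sub_cancel, add_comm 1, add_assoc, Nat.reduceAdd] at h ⊢
  rw [h, pval_zero, Nat.cast_zero]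
  congr 2 with j
  rw [show (j : ℕ) + 2 = j.succ + 1 from rfl, pval_succ, Nat.cast_succ]

theorem sum_signs_pow_desB_signedPerm (σ : Equiv.Perm (Fin n)) :
    ∑ ε : Fin n → Bool, (X : PowerSeries ℚ) ^ desB n (signedPerm σ ε) =
      peakVar ^ (leftPk σ).card * (1 + X) ^ n := by
  simp only [desB_signedPerm]
  rw [sum_pow_descents_signs]
  have hchain : (List.ofFn fun j : Fin n => ((σ j : ℕ) : ℤ) + 1).IsChain (· ≠ ·) :=
    (List.nodup_ofFn.mpr fun i j hij => σ.injective (Fin.ext (by simpa using hij))).isChain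
  cases n with
  | zero => simp [leftPk, signedDescentSum]
  | succ m =>
    rw [List.ofFn_succ] at hchain ⊢
    rw [signedDescentSum, if_neg (by omega), if_pos (by omega), one_mul,
      (signedDescentSum_eq_peakVar_pow _ 0 _ (by omega) (by simp) hchain).1 (by omega),
      card_leftPk, List.length_ofFn]

end LeftPeaks

open PowerSeries in
theorem stmt13 (n : ℕ) :
    ∑ π : Equiv.Perm (Fin n),
        ((4 : PowerSeries ℚ) * X * (((1 + X) ^ 2)⁻¹)) ^ (leftPk π).card =
      ((1 + X) ^ n)⁻¹ *
        ∑ᶠ π : ↥(Bgroup n), (X : PowerSeries ℚ) ^ desB n (π : Equiv.Perm ℤ) := by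
  show ∑ σ, peakVar ^ (leftPk σ).card = _
  rw [← finsum_comp_equiv (signedPermEquiv n), finsum_eq_sum_of_fintype, Fintype.sum_prod_type]
  change _ = _ * ∑ σ, ∑ ε, X ^ desB n (signedPerm σ ε)
  simp only [sum_signs_pow_desB_signedPerm, ← Finset.sum_mul]
  rw [mul_comm _ ((1 + X : PowerSeries ℚ) ^ n), ← mul_assoc,
    PowerSeries.inv_mul_cancel _ (by simp), one_mul]
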